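/- arXiv:2602.03660 — 3 statements merged into one kernel-verified Lean document; each statement's English description precedes it below -/
import Mathlib

section
/- Fix a natural number r ≥ 1. Let S ⊆ ℕ × ℕ be the smallest set of pairs (d,g) that contains (r,0) and is closed under the three moves (A) (d,g) ↦ (d+1,g), (B) (d,g) ↦ (d+1,g+1), and (C) (d,g) ↦ (d+r,g+r+1). Then a pair (d,g) of natural numbers belongs to S if and only if ρ(g,r,d) ≥ 0, where ρ(g,r,d) := g − (r+1)(g−d+r) is computed as an integer. -/
/-- The smallest set of pairs `(d, g)` containing `(r, 0)` and closed under the three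
moves (A) `(d,g) ↦ (d+1,g)`, (B) `(d,g) ↦ (d+1,g+1)` and (C) `(d,g) ↦ (d+r,g+r+1)`. -/
inductive BNReach (r : ℕ) : ℕ × ℕ → Prop
  | base : BNReach r (r, 0)
  | moveA {d g : ℕ} : BNReach r (d, g) → BNReach r (d + 1, g)
  | moveB {d g : ℕ} : BNReach r (d, g) → BNReach r (d + 1, g + 1)
  | moveC {d g : ℕ} : BNReach r (d, g) → BNReach r (d + r, g + r + 1)

private lemma bn_addA (r d g : ℕ) (h : BNReach r (d, g)) (k : ℕ) :
    BNReach r (d + k, g) := by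
  induction k with
  | zero => exact h
  | succ k ih => exact BNReach.moveA ih

private lemma bn_rho (r : ℕ) (p : ℕ × ℕ) (h : BNReach r p) :
    0 ≤ (p.2 : ℤ) - (r + 1) * ((p.2 : ℤ) - p.1 + r) := by
  induction h with
  | base => simp
  | moveA h ih => push_cast at *; nlinarith [ih]
  | moveB h ih => push_cast at *; nlinarith [ih]
  | moveC h ih => push_cast at *; nlinarith [ih]

private lemma bn_rev (r : ℕ) (hr : 1 ≤ r) :
    ∀ g d : ℕ, 0 ≤ (g : ℤ) - (r + 1) * ((g : ℤ) - d + r) → BNReach r (d, g) := by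
  intro g
  induction g using Nat.strong_induction_on with
  | _ g ih =>
    intro d hρ
    match g with
    | 0 =>
      have hd : r ≤ d := by
        by_contra hdr
        push_neg at hdr
        have : (d : ℤ) < r := by exact_mod_cast hdr
        nlinarith
      obtain ⟨k, rfl⟩ := Nat.exists_eq_add_of_le hd
      exact bn_addA r r 0 BNReach.base k
    | g + 1 =>
      by_cases hpos : 1 ≤ (g + 1 : ℤ) - (r + 1) * ((g + 1 : ℤ) - d + r)
      · -- step back via move B
        have hd1 : 1 ≤ d := by
          by_contra hd0
          push_neg at hd0
          interval_cases d
          push_cast at hpos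
          nlinarith
        obtain ⟨d', rfl⟩ := Nat.exists_eq_add_of_le hd1
        have h' : 0 ≤ (g : ℤ) - (r + 1) * ((g : ℤ) - d' + r) := by
          push_cast at hpos ⊢
          nlinarith
        have := BNReach.moveB (ih g (by omega) d' h')
        simpa [Nat.add_comm] using this
      · -- ρ = 0, step back via move C
        push_neg at hpos
        push_cast at hρ
        set m : ℤ := (g + 1 : ℤ) - d + r with hm
        have hle : ((g : ℤ) + 1) ≤ (r + 1) * m :=
          Int.add_one_le_iff.mpr (by linarith)
        have heq : ((g : ℤ) + 1) = (r + 1) * m := by linarith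
        have hr' : (1 : ℤ) ≤ r := by exact_mod_cast hr
        have hm1 : 1 ≤ m := by nlinarith
        have hg : r ≤ g := by
          have : (r : ℤ) + 1 ≤ g + 1 := by nlinarith
          exact_mod_cast (by linarith : (r : ℤ) ≤ g)
        have hd : r ≤ d := by
          have : (r : ℤ) ≤ d := by nlinarith
          exact_mod_cast this
        obtain ⟨d', rfl⟩ := Nat.exists_eq_add_of_le hd
        obtain ⟨g', rfl⟩ := Nat.exists_eq_add_of_le hg
        have hmd : (g' : ℤ) - d' + r = m - 1 := by
          rw [hm]; push_cast; ring
        have h' : 0 ≤ (g' : ℤ) - (r + 1) * ((g' : ℤ) - d' + r) := by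
          rw [hmd]
          push_cast at heq
          linarith
        have := BNReach.moveC (ih g' (by omega) d' h')
        have hrw : (d' + r, g' + r + 1) = (r + d', r + g' + 1) := by
          simp only [Prod.mk.injEq]; omega
        rw [hrw] at this
        exact this

/-- For `r ≥ 1`, a pair `(d, g)` is reachable from `(r, 0)` by the moves (A), (B), (C)
if and only if the Brill--Noether number `ρ(g,r,d) = g - (r+1)(g-d+r)` is nonnegative. -/
theorem bnReach_iff_rho_nonneg (r : ℕ) (hr : 1 ≤ r) (d g : ℕ) :
    BNReach r (d, g) ↔ 0 ≤ (g : ℤ) - (r + 1) * ((g : ℤ) - d + r) := by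
  constructor
  · intro h
    exact bn_rho r (d, g) h
  · exact bn_rev r hr g d
end

section
/- Let g and r be natural numbers and let d be an integer. Suppose a(i,n) ∈ ℤ is given for all 0 ≤ i ≤ g and 0 ≤ n ≤ r, and satisfies: (i) a(0,n) = n for all 0 ≤ n ≤ r; (ii) a(g,n) = d − r + n for all 0 ≤ n ≤ r; (iii) a(i−1,n) ≤ a(i,n) for all 1 ≤ i ≤ g and all 0 ≤ n ≤ r; (iv) for each 1 ≤ i ≤ g there is at most one index n with 0 ≤ n ≤ r such that a(i−1,n) = a(i,n). Then g − (r+1)(g−d+r) ≥ 0. -/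
/-- Combinatorial core of the Brill--Noether nonexistence argument: if integers
`a i n` (for `0 ≤ i ≤ g`, `0 ≤ n ≤ r`) satisfy `a 0 n = n`, `a g n = d - r + n`, are
weakly increasing in `i`, and for each `i` at most one index `n` has `a (i-1) n = a i n`,
then `g - (r+1)(g-d+r) ≥ 0`. -/
theorem rho_nonneg_of_vanishing_sequences (g r : ℕ) (d : ℤ) (a : ℕ → ℕ → ℤ)
    (h0 : ∀ n, n ≤ r → a 0 n = n)
    (hgEnd : ∀ n, n ≤ r → a g n = d - r + n)
    (hmono : ∀ i, 1 ≤ i → i ≤ g → ∀ n, n ≤ r → a (i - 1) n ≤ a i n)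
    (huniq : ∀ i, 1 ≤ i → i ≤ g → ∀ n m, n ≤ r → m ≤ r →
      a (i - 1) n = a i n → a (i - 1) m = a i m → n = m) :
    0 ≤ (g : ℤ) - (r + 1) * ((g : ℤ) - d + r) := by
  have key : ∀ i ∈ Finset.range g,
      (r : ℤ) ≤ ∑ n ∈ Finset.range (r + 1), (a (i + 1) n - a i n) := by
    intro i hi
    simp only [Finset.mem_range] at hi
    have h1 : 1 ≤ i + 1 := Nat.le_add_left 1 i
    have h2 : i + 1 ≤ g := hi
    set S := (Finset.range (r + 1)).filter (fun n => a i n = a (i + 1) n) with hS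
    have hcard : S.card ≤ 1 := by
      apply Finset.card_le_one.mpr
      intro x hx y hy
      simp only [hS, Finset.mem_filter, Finset.mem_range] at hx hy
      exact huniq (i + 1) h1 h2 x y (Nat.lt_succ_iff.mp hx.1) (Nat.lt_succ_iff.mp hy.1)
        (by simpa using hx.2) (by simpa using hy.2)
    have hmono' : ∀ n ∈ Finset.range (r + 1), (0 : ℤ) ≤ a (i + 1) n - a i n := by
      intro n hn
      simp only [Finset.mem_range] at hn
      have := hmono (i + 1) h1 h2 n (Nat.lt_succ_iff.mp hn)
      simp only [Nat.add_sub_cancel] at this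
      omega
    have hge : ∀ n ∈ Finset.range (r + 1) \ S, (1 : ℤ) ≤ a (i + 1) n - a i n := by
      intro n hn
      simp only [Finset.mem_sdiff, hS, Finset.mem_filter, Finset.mem_range] at hn
      have hle := hmono (i + 1) h1 h2 n (Nat.lt_succ_iff.mp hn.1)
      simp only [Nat.add_sub_cancel] at hle
      have hne : a i n ≠ a (i + 1) n := fun h => hn.2 ⟨hn.1, h⟩
      omega
    have hcard2 : r ≤ (Finset.range (r + 1) \ S).card := by
      rw [Finset.card_sdiff_of_subset (by rw [hS]; exact Finset.filter_subset _ _)]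
      simp only [Finset.card_range]
      omega
    calc (r : ℤ) ≤ ((Finset.range (r + 1) \ S).card : ℤ) := by exact_mod_cast hcard2
      _ = ∑ _n ∈ Finset.range (r + 1) \ S, (1 : ℤ) := by simp
      _ ≤ ∑ n ∈ Finset.range (r + 1) \ S, (a (i + 1) n - a i n) :=
          Finset.sum_le_sum hge
      _ ≤ ∑ n ∈ Finset.range (r + 1), (a (i + 1) n - a i n) := by
          apply Finset.sum_le_sum_of_subset_of_nonneg (Finset.sdiff_subset)
          intro n hn _
          exact hmono' n hn
  have total : ∑ i ∈ Finset.range g, ∑ n ∈ Finset.range (r + 1), (a (i + 1) n - a i n)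
      = (r + 1) * (d - r) := by
    rw [Finset.sum_comm]
    have heach : ∀ n ∈ Finset.range (r + 1),
        ∑ i ∈ Finset.range g, (a (i + 1) n - a i n) = d - r := by
      intro n hn
      simp only [Finset.mem_range] at hn
      rw [Finset.sum_range_sub (fun i => a i n)]
      rw [hgEnd n (Nat.lt_succ_iff.mp hn), h0 n (Nat.lt_succ_iff.mp hn)]
      ring
    rw [Finset.sum_congr rfl heach, Finset.sum_const, Finset.card_range]
    ring
  have hineq : (g : ℤ) * r ≤ (r + 1) * (d - r) := by
    rw [← total]
    calc (g : ℤ) * r = ∑ _i ∈ Finset.range g, (r : ℤ) := by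
          simp [mul_comm]
      _ ≤ _ := Finset.sum_le_sum key
  nlinarith [hineq]
end

section
/- Let a, b ≥ 1 be natural numbers and set g = a·b. Let T be the set of bijections f : Fin a × Fin b → Fin g that are strictly increasing in each coordinate, i.e., f(i,j) < f(i',j) whenever i < i' and f(i,j) < f(i,j') whenever j < j' (these are the standard Young tableaux on the a × b rectangular Young diagram). Then the cardinality of T satisfies |T| · ∏_{α=0}^{a−1} (b+α)! = g! · ∏_{α=0}^{a−1} α!. -/
open Finset

/-!
Read a standard tableau of shape `a × b` as the word whose `s`-th letter is the row containing
`s`. Each letter occurs `b` times and, because columns increase, every prefix contains at least as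
many letters `i` as letters `i'` for `i < i'` (a lattice word); conversely the rows of a tableau
are recovered as the sorted positions of each letter.

Let letter `i` be a walker starting at `-i` that steps right whenever `i` is read. Lattice words are
exactly the walks in which no two walkers ever meet. Exchanging the histories of the first two
walkers to meet is a sign-reversing involution on colliding families, which gives the count of
non-colliding families as `∑_σ sign σ · #(walks from -σ(i) to b - i)`. Those counts are multinomial
coefficients, and after multiplying by `∏ (b + k)!` the alternating sum becomes the determinant
`det ((b + x).descFactorial i)`, a Vandermonde determinant equal to `∏_{k < a} k!`.
-/

open Function Equiv Nat

namespace Finset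

variable {α : Type*} [LinearOrder α] {k : ℕ}

lemma orderEmbOfFin_le_of_forall_card_filter_le {S S' : Finset α} (hS : #S = k) (hS' : #S' = k)
    (h : ∀ x, #{y ∈ S' | y ≤ x} ≤ #{y ∈ S | y ≤ x}) (j : Fin k) :
    S.orderEmbOfFin hS j ≤ S'.orderEmbOfFin hS' j := by
  by_contra! hlt
  set x := S'.orderEmbOfFin hS' j
  have hS'x : (j : ℕ) + 1 ≤ #{y ∈ S' | y ≤ x} := by
    rw [← Fin.card_Iic, ← card_map (S'.orderEmbOfFin hS').toEmbedding]
    refine card_le_card fun y hy => ?_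
    obtain ⟨m, hm, rfl⟩ := mem_map.1 hy
    exact mem_filter.2
      ⟨orderEmbOfFin_mem S' hS' m, (S'.orderEmbOfFin hS').le_iff_le.2 (mem_Iic.1 hm)⟩
  have hSx : #{y ∈ S | y ≤ x} ≤ j := by
    rw [← Fin.card_Iio, ← card_map (S.orderEmbOfFin hS).toEmbedding]
    refine card_le_card fun y hy => ?_
    obtain ⟨hyS, hyx⟩ := mem_filter.1 hy
    obtain ⟨m, rfl⟩ : y ∈ Set.range (S.orderEmbOfFin hS) := by rwa [range_orderEmbOfFin]
    exact mem_map_of_mem _ (mem_Iio.2 ((S.orderEmbOfFin hS).lt_iff_lt.1 (hyx.trans_lt hlt)))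
  have := h x
  omega

end Finset

section Multinomial

variable {α ι : Type*}

lemma exists_fun_fiber_card_eq [Fintype α] [Fintype ι] [DecidableEq ι] (μ : ι → ℕ)
    (hμ : ∑ i, μ i = Fintype.card α) :
    ∃ w : α → ι, ∀ i, #{s | w s = i} = μ i := by
  let e : α ≃ Σ i, Fin (μ i) := Fintype.equivOfCardEq (by simp [hμ])
  refine ⟨fun s => (e s).1, fun i => ?_⟩
  rw [← Fintype.card_subtype, Fintype.card_congr ((e.subtypeEquiv fun _ => Iff.rfl).trans
    (sigmaSubtype i)), Fintype.card_fin]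

lemma mem_orbit_domMulAct_perm_iff {w w' : α → ι} :
    w' ∈ MulAction.orbit (Perm α)ᵈᵐᵃ w ↔ ∃ π : Perm α, w ∘ π = w' := by
  simp only [MulAction.mem_orbit_iff]
  constructor
  · rintro ⟨g, rfl⟩
    exact ⟨DomMulAct.mk.symm g, by ext; simp [DomMulAct.smul_apply]⟩
  · rintro ⟨π, rfl⟩
    exact ⟨DomMulAct.mk π, by ext; simp [DomMulAct.smul_apply]⟩

lemma exists_comp_perm_eq_iff_card_fiber_eq [Fintype α] [DecidableEq ι] {w w' : α → ι} :
    (∃ π : Perm α, w ∘ π = w') ↔ ∀ i, #{s | w s = i} = #{s | w' s = i} := by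
  constructor
  · rintro ⟨π, rfl⟩ i
    rw [← card_map π.symm.toEmbedding]
    congr 1
    ext s
    simp
  · intro h
    have e : ∀ i, {s // w' s = i} ≃ {s // w s = i} := fun i =>
      Fintype.equivOfCardEq (by rw [Fintype.card_subtype, Fintype.card_subtype, h i])
    exact ⟨ofFiberEquiv e, funext (ofFiberEquiv_map e)⟩

/-- Orbit–stabilizer for `Perm α` acting on `α → ι` by precomposition: the orbit of a map is the
set of maps with the same fibre sizes, and its stabilizer is `∏ i, Perm (fibre i)`. -/
theorem card_fun_fiber_card_eq_mul_prod_factorial [Fintype α] [DecidableEq α] [Fintype ι]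
    [DecidableEq ι] (μ : ι → ℕ) (hμ : ∑ i, μ i = Fintype.card α) :
    #{w : α → ι | ∀ i, #{s | w s = i} = μ i} * ∏ i, (μ i)! = (Fintype.card α)! := by
  obtain ⟨w₀, hw₀⟩ := exists_fun_fiber_card_eq μ hμ
  have horbit : MulAction.orbit (Perm α)ᵈᵐᵃ w₀ =
      ↑({w : α → ι | ∀ i, #{s | w s = i} = μ i} : Finset _) := by
    ext w
    rw [mem_orbit_domMulAct_perm_iff, exists_comp_perm_eq_iff_card_fiber_eq, mem_coe, mem_filter]
    simp only [hw₀, mem_univ, true_and]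
    exact forall_congr' fun _ => eq_comm
  have hstab : Nat.card (MulAction.stabilizer (Perm α)ᵈᵐᵃ w₀) = ∏ i, (μ i)! := by
    rw [Nat.card_congr (subtypeEquiv (q := fun π : Perm α => w₀ ∘ π = w₀) DomMulAct.mk.symm
        fun _ => DomMulAct.mem_stabilizer_iff),
      Nat.card_eq_fintype_card, DomMulAct.stabilizer_card]
    simp [Fintype.card_subtype, hw₀]
  have := (MulAction.stabilizer (Perm α)ᵈᵐᵃ w₀).index_mul_card
  rw [MulAction.index_stabilizer, horbit, Set.ncard_coe_finset, hstab] at this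
  rw [this, Nat.card_congr DomMulAct.mk.symm, Nat.card_perm, Nat.card_eq_fintype_card]

end Multinomial

theorem det_descFactorial_eq_prod_factorial (a b : ℕ) :
    (Matrix.of fun x i : Fin a => ((b + x).descFactorial i : ℤ)).det =
      ∏ k ∈ range a, (k ! : ℤ) := by
  have h := Matrix.det_eval_matrixOfPolynomials_eq_det_vandermonde
    (fun x : Fin a => ((x : ℕ) : ℤ) + b) (fun i => descPochhammer ℤ i)
    (fun i => descPochhammer_natDegree ℤ i) (fun i => monic_descPochhammer ℤ i)
  rw [Matrix.det_vandermonde_add] at h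
  have hentry : ∀ x i : Fin a,
      (descPochhammer ℤ i).eval (((x : ℕ) : ℤ) + b) = ((b + x).descFactorial i : ℤ) := by
    intro x i
    rw [← descPochhammer_eval_eq_descFactorial, add_comm]
    push_cast
    rfl
  simp only [hentry] at h
  rw [← h]
  rcases a with _ | m
  · simp
  · rw [Matrix.det_vandermonde_id_eq_superFactorial, ← prod_range_succ_factorial]
    push_cast
    rfl

namespace LatticeWalk

section Reflect

variable {ι : Type*} {n : ℕ}

def reflect (τ : Perm ι) (T : ℕ) (w : Fin n → ι) : Fin n → ι :=
  fun s => if (s : ℕ) < T then τ (w s) else w s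

lemma reflect_reflect {τ : Perm ι} (hτ : Involutive τ) (T : ℕ) (w : Fin n → ι) :
    reflect τ T (reflect τ T w) = w := by
  ext s
  unfold reflect
  split_ifs <;> simp [hτ _]

end Reflect

section Walks

variable {ι : Type*} [DecidableEq ι] {n : ℕ}

def prefixCount (w : Fin n → ι) (t : ℕ) (i : ι) : ℕ :=
  #{s : Fin n | (s : ℕ) < t ∧ w s = i}

def trajectory (q : ι → ℤ) (w : Fin n → ι) (t : ℕ) (i : ι) : ℤ :=
  q i + prefixCount w t i

def IsNonColliding (q : ι → ℤ) (w : Fin n → ι) : Prop :=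
  ∀ t, Injective (trajectory q w t)

variable {q : ι → ℤ} {w : Fin n → ι} {s t : ℕ} {i j : ι}

lemma prefixCount_of_le (h : n ≤ t) : prefixCount w t i = prefixCount w n i := by
  unfold prefixCount
  congr 1
  exact filter_congr fun s _ => and_congr_left fun _ => ⟨fun _ => s.isLt, fun hs => by omega⟩

lemma prefixCount_eq_add (hst : s ≤ t) (w : Fin n → ι) (i : ι) :
    prefixCount w t i = prefixCount w s i + #{x : Fin n | s ≤ (x : ℕ) ∧ (x : ℕ) < t ∧ w x = i} := by
  unfold prefixCount
  rw [← card_union_of_disjoint (disjoint_filter.2 fun x _ h h' => by omega), ← filter_or]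
  congr 1
  refine filter_congr fun x _ => ?_
  by_cases hxi : w x = i <;> simp only [hxi, and_true, and_false, or_false]
  omega

lemma prefixCount_succ (ht : t < n) (w : Fin n → ι) (i : ι) :
    prefixCount w (t + 1) i = prefixCount w t i + if w ⟨t, ht⟩ = i then 1 else 0 := by
  have hx : ∀ x : Fin n, (t ≤ (x : ℕ) ∧ (x : ℕ) < t + 1) ↔ x = ⟨t, ht⟩ := fun x => by
    simp only [Fin.ext_iff]; omega
  rw [prefixCount_eq_add t.le_succ]
  simp only [← and_assoc, hx, filter_and, filter_eq', mem_univ, if_true]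
  split_ifs with h <;> simp [h]

lemma prefixCount_eq_card (w : Fin n → ι) (i : ι) : prefixCount w n i = #{s | w s = i} := by
  unfold prefixCount
  congr 1
  exact filter_congr fun s _ => and_iff_right s.isLt

@[simp] lemma trajectory_zero (q : ι → ℤ) (w : Fin n → ι) : trajectory q w 0 = q := by
  ext i
  simp [trajectory, prefixCount]

lemma trajectory_of_le (h : n ≤ t) : trajectory q w t = trajectory q w n := by
  ext i
  simp [trajectory, prefixCount_of_le h]

lemma trajectory_succ (ht : t < n) (q : ι → ℤ) (w : Fin n → ι) (i : ι) :
    trajectory q w (t + 1) i = trajectory q w t i + if w ⟨t, ht⟩ = i then 1 else 0 := by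
  simp only [trajectory, prefixCount_succ ht]
  split_ifs <;> push_cast <;> ring

lemma trajectory_le_succ (q : ι → ℤ) (w : Fin n → ι) (t : ℕ) (i : ι) :
    trajectory q w t i ≤ trajectory q w (t + 1) i ∧
      trajectory q w (t + 1) i ≤ trajectory q w t i + 1 := by
  rcases lt_or_ge t n with ht | ht
  · rw [trajectory_succ ht]; split_ifs <;> omega
  · rw [trajectory_of_le ht, trajectory_of_le (by omega : n ≤ t + 1)]; omega

/-- Walkers move one at a time by a unit step, so walkers that never meet keep their order. -/
lemma IsNonColliding.trajectory_lt (hw : IsNonColliding q w) (h : q i < q j) (t : ℕ) :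
    trajectory q w t i < trajectory q w t j := by
  induction t with
  | zero => simpa
  | succ t ih =>
    have hne : trajectory q w (t + 1) i ≠ trajectory q w (t + 1) j :=
      fun heq => h.ne (congrArg q (hw (t + 1) heq))
    have := trajectory_le_succ q w t i
    have := trajectory_le_succ q w t j
    omega

lemma prefixCount_reflect {T : ℕ} (hs : s ≤ T) (τ : Perm ι) (w : Fin n → ι) (i : ι) :
    prefixCount (reflect τ T w) s i = prefixCount w s (τ.symm i) := by
  unfold prefixCount reflect
  congr 1
  refine filter_congr fun x _ => and_congr_right fun hx => ?_
  rw [if_pos (by omega), ← eq_symm_apply]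

lemma trajectory_reflect {T : ℕ} (hs : s ≤ T) (q : ι → ℤ) (τ : Perm ι) (w : Fin n → ι) :
    trajectory (q ∘ τ.symm) (reflect τ T w) s = trajectory q w s ∘ τ.symm := by
  ext i
  simp [trajectory, prefixCount_reflect hs]

lemma trajectory_reflect_of_le {T : ℕ} (hT : T ≤ s) {τ : Perm ι}
    (hτ : trajectory q w T ∘ τ.symm = trajectory q w T) :
    trajectory (q ∘ τ.symm) (reflect τ T w) s = trajectory q w s := by
  ext i
  have hTi := congrFun ((trajectory_reflect le_rfl q τ w).trans hτ) i
  have hafter : #{x : Fin n | T ≤ (x : ℕ) ∧ (x : ℕ) < s ∧ reflect τ T w x = i} =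
      #{x : Fin n | T ≤ (x : ℕ) ∧ (x : ℕ) < s ∧ w x = i} := by
    congr 1
    exact filter_congr fun x _ => and_congr_right fun hx => by rw [reflect, if_neg (by omega)]
  simp only [trajectory] at hTi ⊢
  rw [prefixCount_eq_add hT (reflect τ T w), prefixCount_eq_add hT w, hafter]
  push_cast
  linarith

end Walks

section Collision

variable {ι : Type*} [DecidableEq ι] {n : ℕ} {q : ι → ℤ} {w : Fin n → ι} {s t : ℕ}

-- `0` (the junk value of `sInf ∅`) when no two walkers ever meet
noncomputable def firstCollision (q : ι → ℤ) (w : Fin n → ι) : ℕ :=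
  sInf {t | ¬ Injective (trajectory q w t)}

open Classical in
noncomputable def collisionSwap (q : ι → ℤ) (w : Fin n → ι) : Perm ι :=
  if h : ∃ k j, k ≠ j ∧
      trajectory q w (firstCollision q w) k = trajectory q w (firstCollision q w) j then
    swap h.choose h.choose_spec.choose
  else 1

lemma not_injective_firstCollision (hw : ¬ IsNonColliding q w) :
    ¬ Injective (trajectory q w (firstCollision q w)) := by
  simp only [IsNonColliding, not_forall] at hw
  exact Nat.sInf_mem hw

lemma injective_of_lt_firstCollision (ht : t < firstCollision q w) :
    Injective (trajectory q w t) :=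
  not_not.1 (Nat.notMem_of_lt_sInf ht)

lemma firstCollision_pos (hq : Injective q) (hw : ¬ IsNonColliding q w) :
    0 < firstCollision q w :=
  Nat.pos_of_ne_zero fun h => not_injective_firstCollision hw (by simpa [h] using hq)

lemma firstCollision_le (hw : ¬ IsNonColliding q w) : firstCollision q w ≤ n := by
  by_contra! h
  have hn : Injective (trajectory q w n) := injective_of_lt_firstCollision h
  exact not_injective_firstCollision hw (by rwa [trajectory_of_le h.le])

/-- Between two consecutive times only the walker `w t` moves, so every pair meeting at time
`t + 1` consists of it and the walker one step ahead of it at time `t`. -/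
lemma swap_eq_of_collide (hinj : Injective (trajectory q w t)) (ht : t < n) {k j k' j' : ι}
    (hkj : k ≠ j) (hc : trajectory q w (t + 1) k = trajectory q w (t + 1) j)
    (hkj' : k' ≠ j') (hc' : trajectory q w (t + 1) k' = trajectory q w (t + 1) j') :
    swap k j = swap k' j' := by
  set m := w ⟨t, ht⟩
  have key : ∀ k j, k ≠ j → trajectory q w (t + 1) k = trajectory q w (t + 1) j →
      ∃ x, trajectory q w t x = trajectory q w t m + 1 ∧ swap k j = swap m x := by
    intro k j hkj hc
    simp only [trajectory_succ ht] at hc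
    by_cases hk : m = k
    · subst hk
      rw [if_pos rfl, if_neg hkj] at hc
      exact ⟨j, by omega, rfl⟩
    by_cases hj : m = j
    · subst hj
      rw [if_neg hk, if_pos rfl] at hc
      exact ⟨k, by omega, swap_comm _ _⟩
    rw [if_neg hk, if_neg hj, add_zero, add_zero] at hc
    exact absurd (hinj hc) hkj
  obtain ⟨x, hx, hkx⟩ := key k j hkj hc
  obtain ⟨x', hx', hkx'⟩ := key k' j' hkj' hc'
  rw [hkx, hkx', hinj (hx.trans hx'.symm)]

lemma collisionSwap_eq (hq : Injective q) (hw : ¬ IsNonColliding q w) {k j : ι} (hkj : k ≠ j)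
    (hc : trajectory q w (firstCollision q w) k = trajectory q w (firstCollision q w) j) :
    collisionSwap q w = swap k j := by
  have huniq : ∀ k' j', k' ≠ j' → trajectory q w (firstCollision q w) k' =
      trajectory q w (firstCollision q w) j' → swap k' j' = swap k j := by
    obtain ⟨t, ht⟩ := Nat.exists_eq_succ_of_ne_zero (firstCollision_pos hq hw).ne'
    have htn := firstCollision_le hw
    rw [ht] at hc htn ⊢
    exact fun k' j' hkj' hc' =>
      swap_eq_of_collide (injective_of_lt_firstCollision (by omega)) htn hkj' hc' hkj hc
  have hex : ∃ k j, k ≠ j ∧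
      trajectory q w (firstCollision q w) k = trajectory q w (firstCollision q w) j :=
    ⟨k, j, hkj, hc⟩
  rw [collisionSwap, dif_pos hex]
  exact huniq _ _ hex.choose_spec.choose_spec.1 hex.choose_spec.choose_spec.2

lemma exists_collisionSwap_eq (hq : Injective q) (hw : ¬ IsNonColliding q w) :
    ∃ k j, k ≠ j ∧
      trajectory q w (firstCollision q w) k = trajectory q w (firstCollision q w) j ∧
      collisionSwap q w = swap k j := by
  obtain ⟨k, j, hc, hkj⟩ := Function.not_injective_iff.1 (not_injective_firstCollision hw)
  exact ⟨k, j, hkj, hc, collisionSwap_eq hq hw hkj hc⟩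

lemma symm_collisionSwap (q : ι → ℤ) (w : Fin n → ι) :
    (collisionSwap q w).symm = collisionSwap q w := by
  unfold collisionSwap
  split_ifs
  · exact symm_swap _ _
  · rfl

lemma sign_collisionSwap [Fintype ι] (hq : Injective q) (hw : ¬ IsNonColliding q w) :
    Perm.sign (collisionSwap q w) = -1 := by
  obtain ⟨k, j, hkj, -, hτ⟩ := exists_collisionSwap_eq hq hw
  rw [hτ, Perm.sign_swap hkj]

lemma trajectory_firstCollision_comp_collisionSwap (hq : Injective q) (hw : ¬ IsNonColliding q w) :
    trajectory q w (firstCollision q w) ∘ collisionSwap q w =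
      trajectory q w (firstCollision q w) := by
  obtain ⟨k, j, -, hc, hτ⟩ := exists_collisionSwap_eq hq hw
  ext i
  rw [hτ, comp_apply, swap_apply_def]
  split_ifs <;> simp_all

lemma involutive_collisionSwap (q : ι → ℤ) (w : Fin n → ι) : Involutive (collisionSwap q w) :=
  fun i => by nth_rw 1 [← symm_collisionSwap]; exact symm_apply_apply _ _

lemma collisionSwap_mul_self (q : ι → ℤ) (w : Fin n → ι) :
    collisionSwap q w * collisionSwap q w = 1 :=
  Perm.ext (involutive_collisionSwap q w)

noncomputable def reflectAtCollision (q : ι → ℤ) (w : Fin n → ι) : Fin n → ι :=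
  reflect (collisionSwap q w) (firstCollision q w) w

lemma trajectory_reflectAtCollision (hs : s ≤ firstCollision q w) :
    trajectory (q ∘ collisionSwap q w) (reflectAtCollision q w) s =
      trajectory q w s ∘ collisionSwap q w := by
  have h := trajectory_reflect hs q (collisionSwap q w) w
  rwa [symm_collisionSwap] at h

lemma trajectory_reflectAtCollision_of_le (hq : Injective q) (hw : ¬ IsNonColliding q w)
    (hs : firstCollision q w ≤ s) :
    trajectory (q ∘ collisionSwap q w) (reflectAtCollision q w) s = trajectory q w s := by
  have h := trajectory_reflect_of_le hs (τ := collisionSwap q w)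
    (by rw [symm_collisionSwap]; exact trajectory_firstCollision_comp_collisionSwap hq hw)
  rwa [symm_collisionSwap] at h

lemma firstCollision_reflectAtCollision (hw : ¬ IsNonColliding q w) :
    firstCollision (q ∘ collisionSwap q w) (reflectAtCollision q w) = firstCollision q w := by
  have key : ∀ s ≤ firstCollision q w,
      Injective (trajectory (q ∘ collisionSwap q w) (reflectAtCollision q w) s) ↔
        Injective (trajectory q w s) := fun s hs => by
    rw [trajectory_reflectAtCollision hs, EquivLike.injective_comp]
  refine IsLeast.csInf_eq ⟨fun h => not_injective_firstCollision hw ((key _ le_rfl).1 h), ?_⟩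
  intro s hs
  by_contra! h
  exact hs ((key s h.le).2 (injective_of_lt_firstCollision h))

lemma not_isNonColliding_reflectAtCollision (hq : Injective q) (hw : ¬ IsNonColliding q w) :
    ¬ IsNonColliding (q ∘ collisionSwap q w) (reflectAtCollision q w) := fun h =>
  not_injective_firstCollision hw <| by
    simpa [trajectory_reflectAtCollision_of_le hq hw] using h (firstCollision q w)

lemma collisionSwap_reflectAtCollision (hq : Injective q) (hw : ¬ IsNonColliding q w) :
    collisionSwap (q ∘ collisionSwap q w) (reflectAtCollision q w) = collisionSwap q w := by
  obtain ⟨k, j, hkj, hc, hτ⟩ := exists_collisionSwap_eq hq hw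
  refine (collisionSwap_eq (hq.comp (collisionSwap q w).injective)
    (not_isNonColliding_reflectAtCollision hq hw) hkj ?_).trans hτ.symm
  rwa [firstCollision_reflectAtCollision hw, trajectory_reflectAtCollision_of_le hq hw le_rfl]

lemma reflectAtCollision_reflectAtCollision (hq : Injective q) (hw : ¬ IsNonColliding q w) :
    reflectAtCollision (q ∘ collisionSwap q w) (reflectAtCollision q w) = w := by
  rw [reflectAtCollision, collisionSwap_reflectAtCollision hq hw,
    firstCollision_reflectAtCollision hw]
  exact reflect_reflect (involutive_collisionSwap q w) _ _

end Collision

section SignedCount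

variable {ι : Type*} [Fintype ι] [DecidableEq ι] {n : ℕ} {p : ι → ℤ}

open Classical in
/-- Swapping the two walkers at their first meeting is a sign-reversing involution on the
colliding families of walks with prescribed endpoints. -/
lemma sum_sign_of_not_isNonColliding (hp : Injective p) (e : ι → ℤ) :
    ∑ x ∈ {x : Perm ι × (Fin n → ι) |
        trajectory (p ∘ x.1) x.2 n = e ∧ ¬ IsNonColliding (p ∘ x.1) x.2},
      (Perm.sign x.1 : ℤ) = 0 := by
  have hcomp : ∀ σ τ : Perm ι, p ∘ ⇑(σ * τ) = (p ∘ σ) ∘ τ := fun _ _ => rfl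
  refine sum_involution
    (fun x _ => (x.1 * collisionSwap (p ∘ x.1) x.2, reflectAtCollision (p ∘ x.1) x.2))
    (fun x hx => ?_) (fun x hx _ => ?_) (fun x hx => ?_) (fun x hx => ?_)
  all_goals
    obtain ⟨hend, hw⟩ := (mem_filter.1 hx).2
    have hq : Injective (p ∘ x.1) := hp.comp x.1.injective
  · rw [Perm.sign_mul, sign_collisionSwap hq hw]
    simp
  · intro h
    have := congrArg (Perm.sign ∘ Prod.fst) h
    simp [Perm.sign_mul, sign_collisionSwap hq hw] at this
  · simp only [mem_filter, mem_univ, true_and, hcomp]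
    refine ⟨?_, not_isNonColliding_reflectAtCollision hq hw⟩
    rw [trajectory_reflectAtCollision_of_le hq hw (firstCollision_le hw), hend]
  · simp only [hcomp, collisionSwap_reflectAtCollision hq hw,
      reflectAtCollision_reflectAtCollision hq hw, mul_assoc]
    rw [collisionSwap_mul_self, mul_one]

end SignedCount

section Ordered

variable {ι : Type*} [Fintype ι] [LinearOrder ι] {n : ℕ} {p : ι → ℤ}

lemma eq_one_of_isNonColliding {e : ι → ℤ} (hp : StrictAnti p)
    (he : StrictAnti e) {σ : Perm ι} {w : Fin n → ι} (hw : IsNonColliding (p ∘ σ) w)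
    (hend : trajectory (p ∘ σ) w n = e) : σ = 1 := by
  have hσ : StrictMono σ := by
    intro i j hij
    by_contra! h
    have h0 : (p ∘ σ) i < (p ∘ σ) j := hp (h.lt_of_ne (σ.injective.ne hij.ne'))
    have := hw.trajectory_lt h0 n
    rw [hend] at this
    exact (he hij).not_gt this
  exact Perm.ext (congrFun ((hσ.range_inj strictMono_id).1 (by simp)))

open Classical in
/-- A one-dimensional Lindström–Gessel–Viennot (Karlin–McGregor) formula. -/
theorem card_isNonColliding_eq_sum_sign {e : ι → ℤ} (hp : StrictAnti p)
    (he : StrictAnti e) :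
    (#{w : Fin n → ι | trajectory p w n = e ∧ IsNonColliding p w} : ℤ) =
      ∑ σ : Perm ι, Perm.sign σ * (#{w : Fin n → ι | trajectory (p ∘ σ) w n = e} : ℤ) := by
  have hpairs : ∑ σ : Perm ι, Perm.sign σ * (#{w : Fin n → ι | trajectory (p ∘ σ) w n = e} : ℤ) =
      ∑ x ∈ {x : Perm ι × (Fin n → ι) | trajectory (p ∘ x.1) x.2 n = e}, (Perm.sign x.1 : ℤ) := by
    rw [sum_filter, ← univ_product_univ, sum_product]
    refine sum_congr rfl fun σ _ => ?_
    dsimp only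
    rw [← sum_filter, sum_const, nsmul_eq_mul, mul_comm]
  rw [hpairs, ← sum_filter_add_sum_filter_not _ (fun x => IsNonColliding (p ∘ x.1) x.2)]
  simp only [filter_filter]
  rw [sum_sign_of_not_isNonColliding hp.injective, add_zero]
  have hS : ({x : Perm ι × (Fin n → ι) | trajectory (p ∘ x.1) x.2 n = e ∧
      IsNonColliding (p ∘ x.1) x.2} : Finset _) = ({w : Fin n → ι | trajectory p w n = e ∧
      IsNonColliding p w} : Finset _).map (Embedding.sectR 1 _) := by
    ext ⟨σ, w⟩
    simp only [mem_filter, mem_univ, true_and, mem_map, Embedding.sectR_apply, Prod.mk.injEq]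
    constructor
    · rintro ⟨hend, hw⟩
      obtain rfl := eq_one_of_isNonColliding hp he hw hend
      exact ⟨w, ⟨hend, hw⟩, rfl, rfl⟩
    · rintro ⟨w, h, rfl, rfl⟩
      exact h
  rw [hS, sum_map]
  simp

end Ordered

section Tableaux

variable {a b n : ℕ}

def IsLatticeWord {ι : Type*} [LinearOrder ι] (w : Fin n → ι) : Prop :=
  ∀ t, Antitone (prefixCount w t)

lemma isNonColliding_neg_iff {w : Fin n → Fin a} :
    IsNonColliding (fun i : Fin a => -(i : ℤ)) w ↔ IsLatticeWord w := by
  constructor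
  · intro hw t
    rcases a with _ | a
    · exact fun i => i.elim0
    rw [Fin.antitone_iff_succ_le]
    intro i
    have := hw.trajectory_lt (i := i.succ) (j := i.castSucc) (by simp) t
    simp only [trajectory, Fin.val_succ, Fin.val_castSucc] at this
    omega
  · intro hw t
    refine StrictAnti.injective fun i j hij => ?_
    have := hw t hij.le
    have : (i : ℕ) < j := hij
    simp only [trajectory]
    omega

lemma trajectory_neg_comp_eq_iff {σ : Perm (Fin a)} {w : Fin n → Fin a} :
    trajectory ((fun i : Fin a => -(i : ℤ)) ∘ σ) w n = (fun i : Fin a => (b : ℤ) - i) ↔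
      ∀ i, #{s | w s = i} + i = b + σ i := by
  simp only [funext_iff, trajectory, prefixCount_eq_card, comp_apply]
  exact forall_congr' fun i => by omega

abbrev IsStandardTableau (f : Fin a × Fin b → Fin n) : Prop :=
  Bijective f ∧ (∀ (i i' : Fin a) (j : Fin b), i < i' → f (i, j) < f (i', j)) ∧
    (∀ (i : Fin a) (j j' : Fin b), j < j' → f (i, j) < f (i, j'))

def rowWord (e : Fin a × Fin b ≃ Fin n) : Fin n → Fin a :=
  fun s => (e.symm s).1

lemma prefixCount_rowWord (e : Fin a × Fin b ≃ Fin n) (t : ℕ) (i : Fin a) :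
    prefixCount (rowWord e) t i = #{j | (e (i, j) : ℕ) < t} := by
  have hpair : ∀ s, (e.symm s).1 = i → (i, (e.symm s).2) = e.symm s :=
    fun s hs => Prod.ext hs.symm rfl
  unfold prefixCount rowWord
  refine card_bij' (fun s _ => (e.symm s).2) (fun j _ => e (i, j)) ?_ ?_ ?_ ?_ <;>
    simp only [mem_filter, mem_univ, true_and]
  · intro s hs
    rw [hpair s hs.2, apply_symm_apply]
    exact hs.1
  · intro j hj
    simpa using hj
  · intro s hs
    rw [hpair s hs.2, apply_symm_apply]
  · intro j _
    simp

lemma card_rowWord (e : Fin a × Fin b ≃ Fin n) (i : Fin a) : #{s | rowWord e s = i} = b := by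
  rw [← prefixCount_eq_card, prefixCount_rowWord]
  simp

lemma isLatticeWord_rowWord (e : Fin a × Fin b ≃ Fin n)
    (hcol : ∀ (i i' : Fin a) (j : Fin b), i < i' → e (i, j) < e (i', j)) :
    IsLatticeWord (rowWord e) := by
  intro t i i' hii'
  rw [prefixCount_rowWord, prefixCount_rowWord]
  refine card_le_card fun j hj => mem_filter.2 ⟨mem_univ _, ?_⟩
  have hj := (mem_filter.1 hj).2
  rcases hii'.lt_or_eq with h | rfl
  · exact lt_trans (hcol i i' j h) hj
  · exact hj

def wordTableau (w : Fin n → Fin a) (hw : ∀ i, #{s | w s = i} = b) : Fin a × Fin b → Fin n :=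
  fun p => ({s | w s = p.1} : Finset (Fin n)).orderEmbOfFin (hw p.1) p.2

variable {w : Fin n → Fin a} {hw : ∀ i, #{s | w s = i} = b}

lemma apply_wordTableau (p : Fin a × Fin b) : w (wordTableau w hw p) = p.1 :=
  (mem_filter.1 (orderEmbOfFin_mem ({s | w s = p.1} : Finset (Fin n)) (hw p.1) p.2)).2

lemma strictMono_wordTableau (i : Fin a) : StrictMono fun j => wordTableau w hw (i, j) :=
  (({s | w s = i} : Finset (Fin n)).orderEmbOfFin (hw i)).strictMono

lemma card_filter_le_eq_prefixCount (x : Fin n) (i : Fin a) :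
    #{y ∈ ({s | w s = i} : Finset (Fin n)) | y ≤ x} = prefixCount w (x + 1) i := by
  unfold prefixCount
  rw [filter_filter]
  congr 1
  exact filter_congr fun y _ => by rw [and_comm, Fin.le_def, Nat.lt_succ_iff]

lemma IsLatticeWord.wordTableau_lt (hl : IsLatticeWord w) {i i' : Fin a} (h : i < i') (j : Fin b) :
    wordTableau w hw (i, j) < wordTableau w hw (i', j) := by
  refine lt_of_le_of_ne (orderEmbOfFin_le_of_forall_card_filter_le _ _ (fun x => ?_) j)
    fun heq => ?_
  · rw [card_filter_le_eq_prefixCount, card_filter_le_eq_prefixCount]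
    exact hl _ h.le
  · simpa [apply_wordTableau, h.ne] using congrArg w heq

lemma bijective_wordTableau (hn : n = a * b) : Bijective (wordTableau w hw) := by
  rw [Fintype.bijective_iff_injective_and_card]
  refine ⟨?_, by simp [hn]⟩
  rintro ⟨i, j⟩ ⟨i', j'⟩ h
  obtain rfl : i = i' := by simpa [apply_wordTableau] using congrArg w h
  rw [(strictMono_wordTableau i).injective h]

lemma wordTableau_rowWord (e : Fin a × Fin b ≃ Fin n)
    (hrow : ∀ (i : Fin a) (j j' : Fin b), j < j' → e (i, j) < e (i, j')) :
    wordTableau (rowWord e) (card_rowWord e) = e := by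
  funext ⟨i, j⟩
  refine (congrFun (orderEmbOfFin_unique (card_rowWord e i) (f := fun j => e (i, j))
    (fun j => mem_filter.2 ⟨mem_univ _, by simp [rowWord]⟩) (fun j j' h => hrow i j j' h)) j).symm

lemma rowWord_wordTableau (hb : Bijective (wordTableau w hw)) :
    rowWord (ofBijective _ hb) = w := by
  funext s
  obtain ⟨p, rfl⟩ := hb.2 s
  simp [rowWord, apply_wordTableau]

noncomputable def standardTableauEquiv (hn : n = a * b) :
    {f : Fin a × Fin b → Fin n // IsStandardTableau f} ≃
      {w : Fin n → Fin a // (∀ i, #{s | w s = i} = b) ∧ IsLatticeWord w} where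
  toFun f := ⟨rowWord (ofBijective f.1 f.2.1), card_rowWord _, isLatticeWord_rowWord _ f.2.2.1⟩
  invFun w := ⟨wordTableau w.1 w.2.1, bijective_wordTableau hn,
    fun _ _ j h => w.2.2.wordTableau_lt h j, fun i _ _ h => strictMono_wordTableau i h⟩
  left_inv f := Subtype.ext (wordTableau_rowWord _ f.2.2.2)
  right_inv w := Subtype.ext (rowWord_wordTableau (bijective_wordTableau (hw := w.2.1) hn))

end Tableaux

section Rectangle

variable {a b : ℕ}

lemma card_fiber_card_add_eq_mul_prod_factorial (σ : Perm (Fin a)) :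
    #{w : Fin (a * b) → Fin a | ∀ i, #{s | w s = i} + i = b + σ i} * ∏ k ∈ range a, (b + k)! =
      (a * b)! * ∏ i, (b + σ i).descFactorial i := by
  rw [← Fin.prod_univ_eq_prod_range (fun k => (b + k)!),
    ← Equiv.prod_comp σ (fun k : Fin a => (b + k)!)]
  by_cases h : ∀ i : Fin a, (i : ℕ) ≤ b + σ i
  · let μ := fun i : Fin a => b + σ i - i
    have hfilter : #{w : Fin (a * b) → Fin a | ∀ i, #{s | w s = i} + i = b + σ i} =
        #{w : Fin (a * b) → Fin a | ∀ i, #{s | w s = i} = μ i} := by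
      congr 1
      exact filter_congr fun w _ => forall_congr' fun i => by
        show _ ↔ _ = b + σ i - i
        have := h i
        omega
    have hsum : ∑ i, μ i = Fintype.card (Fin (a * b)) := by
      have : ∑ i, μ i + ∑ i : Fin a, (i : ℕ) = a * b + ∑ i : Fin a, (i : ℕ) := by
        rw [← sum_add_distrib, sum_congr rfl fun i _ => Nat.sub_add_cancel (h i), sum_add_distrib,
          Equiv.sum_comp σ (fun i : Fin a => (i : ℕ))]
        simp
      simpa using this
    have hfact : ∀ i : Fin a, (b + σ i)! = (b + σ i).descFactorial i * (μ i)! := fun i => by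
      rw [mul_comm, Nat.factorial_mul_descFactorial (h i)]
    rw [hfilter, prod_congr rfl fun i _ => hfact i, prod_mul_distrib, mul_left_comm]
    have := card_fun_fiber_card_eq_mul_prod_factorial μ hsum
    rw [Fintype.card_fin] at this
    rw [← this, mul_comm]
    -- the two filters differ only in their `Decidable` instances
    congr
  · simp only [not_forall, not_le] at h
    obtain ⟨i, hi⟩ := h
    rw [prod_eq_zero (f := fun i : Fin a => (b + σ i).descFactorial i) (mem_univ i)
        (Nat.descFactorial_eq_zero_iff_lt.2 hi),
      filter_false_of_mem fun w _ hw => by have := hw i; omega]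
    simp

lemma card_trajectory_eq_mul_prod_factorial (σ : Perm (Fin a)) :
    #{w : Fin (a * b) → Fin a | trajectory ((fun i : Fin a => -(i : ℤ)) ∘ σ) w (a * b) =
        fun i : Fin a => (b : ℤ) - i} * ∏ k ∈ range a, (b + k)! =
      (a * b)! * ∏ i, (b + σ i).descFactorial i := by
  rw [← card_fiber_card_add_eq_mul_prod_factorial σ]
  congr 2
  exact filter_congr fun w _ => trajectory_neg_comp_eq_iff

open Classical in
lemma card_latticeWord_eq_card_isNonColliding (a b : ℕ) :
    #{w : Fin (a * b) → Fin a | (∀ i, #{s | w s = i} = b) ∧ IsLatticeWord w} =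
      #{w : Fin (a * b) → Fin a | trajectory (fun i : Fin a => -(i : ℤ)) w (a * b) =
        (fun i : Fin a => (b : ℤ) - i) ∧ IsNonColliding (fun i : Fin a => -(i : ℤ)) w} := by
  congr 1
  refine filter_congr fun w _ => and_congr ?_ isNonColliding_neg_iff.symm
  simpa using (trajectory_neg_comp_eq_iff (σ := 1) (w := w) (b := b)).symm

open Classical in
theorem card_latticeWord_mul_prod_factorial (a b : ℕ) :
    #{w : Fin (a * b) → Fin a | (∀ i, #{s | w s = i} = b) ∧ IsLatticeWord w} *
      ∏ k ∈ range a, (b + k)! = (a * b)! * ∏ k ∈ range a, k ! := by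
  have hLGV := card_isNonColliding_eq_sum_sign (n := a * b) (p := fun i : Fin a => -(i : ℤ))
    (e := fun i : Fin a => (b : ℤ) - i) (fun _ _ h => by simpa using h)
    (fun _ _ h => by simpa using h)
  rw [← Nat.cast_inj (R := ℤ), Nat.cast_mul, Nat.cast_mul]
  calc _ = ∑ σ : Perm (Fin a), Perm.sign σ *
        ((#{w : Fin (a * b) → Fin a | trajectory ((fun i : Fin a => -(i : ℤ)) ∘ σ) w (a * b) =
          fun i : Fin a => (b : ℤ) - i} * ∏ k ∈ range a, (b + k)! : ℕ) : ℤ) := by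
        rw [card_latticeWord_eq_card_isNonColliding, hLGV, sum_mul]
        push_cast
        exact sum_congr rfl fun σ _ => by ring
    _ = ∑ σ : Perm (Fin a), Perm.sign σ *
        (((a * b)! * ∏ i, (b + σ i).descFactorial i : ℕ) : ℤ) := by
        simp only [card_trajectory_eq_mul_prod_factorial]
    _ = (a * b)! * (Matrix.of fun x i : Fin a => ((b + x).descFactorial i : ℤ)).det := by
        rw [Matrix.det_apply, mul_sum]
        refine sum_congr rfl fun σ _ => ?_
        simp only [Units.smul_def, zsmul_eq_mul, Matrix.of_apply]
        push_cast
        ring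
    _ = _ := by
        rw [det_descFactorial_eq_prod_factorial, Nat.cast_prod]

end Rectangle

end LatticeWalk

open LatticeWalk in
theorem card_rectangular_SYT_general (a b : ℕ)
    (g : ℕ) (hg : g = a * b) :
    Nat.card {f : Fin a × Fin b → Fin g //
        Function.Bijective f ∧
        (∀ (i i' : Fin a) (j : Fin b), i < i' → f (i, j) < f (i', j)) ∧
        (∀ (i : Fin a) (j j' : Fin b), j < j' → f (i, j) < f (i, j'))} *
      ∏ α ∈ Finset.range a, Nat.factorial (b + α) =
    Nat.factorial g * ∏ α ∈ Finset.range a, Nat.factorial α := by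
  classical
  subst hg
  rw [Nat.card_congr (standardTableauEquiv rfl), Nat.card_eq_fintype_card, Fintype.card_subtype]
  exact card_latticeWord_mul_prod_factorial a b

/-- The number of standard Young tableaux on the `a × b` rectangle (encoded as bijections
`Fin a × Fin b → Fin g`, `g = a·b`, strictly increasing in each coordinate) satisfies the
hook-length-type identity `|T| · ∏_{α<a} (b+α)! = g! · ∏_{α<a} α!`. -/
theorem card_rectangular_SYT (a b : ℕ) (ha : 1 ≤ a) (hb : 1 ≤ b)
    (g : ℕ) (hg : g = a * b) :
    Nat.card {f : Fin a × Fin b → Fin g //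
        Function.Bijective f ∧
        (∀ (i i' : Fin a) (j : Fin b), i < i' → f (i, j) < f (i', j)) ∧
        (∀ (i : Fin a) (j j' : Fin b), j < j' → f (i, j) < f (i, j'))} *
      ∏ α ∈ Finset.range a, Nat.factorial (b + α) =
    Nat.factorial g * ∏ α ∈ Finset.range a, Nat.factorial α :=
  card_rectangular_SYT_general a b g hg
end
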